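/- arXiv:1601.02234 — 6 statements merged into one kernel-verified Lean document; each statement's English description precedes it below -/
import Mathlib

section
/- A graph G is a hypo-unique-domination graph with γ(G) = 2 if and only if G is isomorphic to the complete graph K_n minus a perfect matching for some even n ≥ 4. -/
open SimpleGraph

variable {V : Type*}

/-- `D` is a dominating set of `G`. -/
def IsDomSet (G : SimpleGraph V) (D : Finset V) : Prop :=
  ∀ v : V, ∃ u ∈ D, u = v ∨ G.Adj u v

/-- The domination number `γ(G)`. -/
noncomputable def domNum (G : SimpleGraph V) : ℕ :=
  sInf {n | ∃ D : Finset V, IsDomSet G D ∧ D.card = n}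

/-- `D` is a minimum dominating set (γ-set) of `G`. -/
def IsGammaSet (G : SimpleGraph V) (D : Finset V) : Prop :=
  IsDomSet G D ∧ D.card = domNum G

/-- The graph `G - x` obtained by deleting the vertex `x`. -/
def vdel (G : SimpleGraph V) (x : V) : SimpleGraph {u : V // u ≠ x} :=
  SimpleGraph.comap Subtype.val G

/-- `G` is a hypo-unique-domination graph: `G` has at least two γ-sets,
but `G - x` has a unique γ-set for every vertex `x`. -/
def HypoUD (G : SimpleGraph V) : Prop :=
  (∃ D₁ D₂ : Finset V, IsGammaSet G D₁ ∧ IsGammaSet G D₂ ∧ D₁ ≠ D₂) ∧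
  ∀ x : V, ∃! D : Finset {u : V // u ≠ x}, IsGammaSet (vdel G x) D

/-- `D` is an efficient dominating set of `G`: every vertex is dominated exactly once. -/
def IsEDS (G : SimpleGraph V) (D : Finset V) : Prop :=
  ∀ v : V, ∃! u : V, u ∈ D ∧ (u = v ∨ G.Adj u v)

/-- `G` is a hypo-efficient-domination graph: `G` has no EDS,
but `G - x` has an EDS for every vertex `x`. -/
def HypoED (G : SimpleGraph V) : Prop :=
  (¬ ∃ D : Finset V, IsEDS G D) ∧
  ∀ x : V, ∃ D : Finset {u : V // u ≠ x}, IsEDS (vdel G x) D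

/-- The complete graph on `2 * m` vertices minus a perfect matching:
vertices are pairs `(i, j)` with `i : Fin m`, and two vertices are adjacent
iff their first coordinates differ (the matching pairs `(i,0)(i,1)` are the
deleted edges). -/
def completeMinusPM (m : ℕ) : SimpleGraph (Fin m × Fin 2) where
  Adj a b := a.1 ≠ b.1
  symm := ⟨fun _ _ h => h.symm⟩
  loopless := ⟨fun _ h => h rfl⟩

/-!
Write `AdjAllBut G u x` when `u` is adjacent to every vertex other than itself and `x`, i.e. `{u}`
dominates `G - x`. Suppose `γ(G) = 2` and `G` is hypo-UD. The heart of the proof is that every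
`G - x` has such a dominator `f x`. Otherwise `γ(G - x) = 2`, and uniqueness says that at most one
pair dominates `G - x`; in particular at most one `γ`-set of `G` avoids `x`. This is played against
the two given `γ`-sets and against the `γ`-sets `{u, w}`, `w ∈ N[y]`, produced by any vertex `y`
with a dominator `u` of `G - y`, in a case analysis on `|V| = 3, 4, ≥ 5` and on whether `x`
itself dominates some `G - xb`.

Once `f` exists, `f x` has `x` as its only non-neighbour, so `f` is injective, hence a
fixed-point-free involution, and `G` is `K_n` minus the perfect matching `{x, f x}`. Conversely, in
that graph `f x` is the unique dominator of `G - x`, while `γ = 2` with many `γ`-sets once `n ≥ 4`.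
-/

section Domination

variable {G : SimpleGraph V} {D : Finset V}

theorem domNum_le (h : IsDomSet G D) : domNum G ≤ D.card :=
  Nat.sInf_le ⟨D, h, rfl⟩

theorem IsDomSet.nonempty [Nonempty V] (h : IsDomSet G D) : D.Nonempty :=
  let ⟨v⟩ := ‹Nonempty V›
  let ⟨u, hu, _⟩ := h v
  ⟨u, hu⟩

variable [Fintype V]

theorem isDomSet_univ (G : SimpleGraph V) : IsDomSet G Finset.univ :=
  fun v => ⟨v, Finset.mem_univ v, Or.inl rfl⟩

theorem exists_isGammaSet (G : SimpleGraph V) : ∃ D, IsGammaSet G D :=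
  Nat.sInf_mem (s := {n | ∃ D : Finset V, IsDomSet G D ∧ D.card = n})
    ⟨_, _, isDomSet_univ G, rfl⟩

theorem domNum_pos [Nonempty V] : 0 < domNum G := by
  obtain ⟨D, hD, hcard⟩ := exists_isGammaSet G
  exact hcard ▸ hD.nonempty.card_pos

theorem domNum_eq_one [Nonempty V] {s : V} (h : IsDomSet G {s}) : domNum G = 1 :=
  le_antisymm (by simpa using domNum_le h) domNum_pos

theorem domNum_eq_two [Nonempty V] [DecidableEq V] {a b : V} (hab : a ≠ b)
    (hpair : IsDomSet G {a, b}) (hsingle : ∀ s, ¬ IsDomSet G {s}) : domNum G = 2 := by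
  obtain ⟨D, hD, hcard⟩ := exists_isGammaSet G
  have hle := domNum_le hpair
  rw [Finset.card_pair hab] at hle
  have hne_one : D.card ≠ 1 := fun h1 => by
    obtain ⟨s, rfl⟩ := Finset.card_eq_one.1 h1
    exact hsingle s hD
  have := hD.nonempty.card_pos
  omega

end Domination

section Cardinality

variable [Fintype V]

theorem exists_notMem_of_card_lt {s : Finset V} (h : s.card < Fintype.card V) : ∃ v, v ∉ s :=
  let ⟨v, _, hv⟩ := Finset.exists_mem_notMem_of_card_lt_card (t := Finset.univ) h
  ⟨v, hv⟩

theorem mem_of_card_le {s : Finset V} (h : Fintype.card V ≤ s.card) (v : V) : v ∈ s := by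
  rw [s.eq_univ_of_card (le_antisymm s.card_le_univ h)]
  exact Finset.mem_univ v

theorem three_le_card_of_ne [DecidableEq V] {D₁ D₂ : Finset V} (hc₁ : D₁.card = 2)
    (hc₂ : D₂.card = 2) (hne : D₁ ≠ D₂) : 3 ≤ Fintype.card V := by
  have hunion : 3 ≤ (D₁ ∪ D₂).card := by
    by_contra! h
    have h₁ : D₁ = D₁ ∪ D₂ := Finset.eq_of_subset_of_card_le Finset.subset_union_left (by omega)
    have h₂ : D₂ = D₁ ∪ D₂ := Finset.eq_of_subset_of_card_le Finset.subset_union_right (by omega)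
    exact hne (h₁.trans h₂.symm)
  exact hunion.trans (Finset.card_le_univ _)

end Cardinality

def AdjAllBut (G : SimpleGraph V) (u x : V) : Prop :=
  u ≠ x ∧ ∀ w, w ≠ u → w ≠ x → G.Adj u w

def IsDomSetDel (G : SimpleGraph V) (x : V) (E : Finset V) : Prop :=
  ∀ w, w ≠ x → ∃ u ∈ E, u = w ∨ G.Adj u w

theorem IsDomSet.isDomSetDel {G : SimpleGraph V} {E : Finset V} (h : IsDomSet G E) (x : V) :
    IsDomSetDel G x E :=
  fun w _ => h w

theorem AdjAllBut.isDomSet_pair [DecidableEq V] {G : SimpleGraph V} {u y w : V}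
    (h : AdjAllBut G u y) (hw : w = y ∨ G.Adj w y) : IsDomSet G {u, w} := by
  intro v
  by_cases hvu : v = u
  · exact ⟨u, by simp, Or.inl hvu.symm⟩
  by_cases hvy : v = y
  · subst hvy
    exact ⟨w, by simp, hw⟩
  · exact ⟨u, by simp, Or.inr (h.2 v hvu hvy)⟩

section Deletion

variable [DecidableEq V] {G : SimpleGraph V} {x : V}

theorem isDomSet_vdel_singleton_iff (s : {u : V // u ≠ x}) :
    IsDomSet (vdel G x) {s} ↔ AdjAllBut G s x := by
  constructor
  · intro h
    refine ⟨s.2, fun w hws hwx => ?_⟩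
    obtain ⟨t, ht, hts⟩ := h ⟨w, hwx⟩
    rw [Finset.mem_singleton] at ht
    subst ht
    exact hts.resolve_left fun h => hws (congrArg Subtype.val h).symm
  · rintro ⟨-, h⟩ v
    refine ⟨s, Finset.mem_singleton_self s, ?_⟩
    by_cases hv : v = s
    · exact Or.inl hv.symm
    · exact Or.inr (h v (fun h' => hv (Subtype.ext h')) v.2)

variable [Fintype V]

theorem domNum_vdel_eq_one {u : V} (h : AdjAllBut G u x) : domNum (vdel G x) = 1 :=
  haveI : Nonempty {v : V // v ≠ x} := ⟨⟨u, h.1⟩⟩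
  domNum_eq_one ((isDomSet_vdel_singleton_iff ⟨u, h.1⟩).2 h)

theorem isGammaSet_vdel_singleton {u : V} (h : AdjAllBut G u x) :
    IsGammaSet (vdel G x) {⟨u, h.1⟩} :=
  ⟨(isDomSet_vdel_singleton_iff _).2 h, by rw [Finset.card_singleton, domNum_vdel_eq_one h]⟩

theorem AdjAllBut.eq_of_existsUnique (hU : ∃! D, IsGammaSet (vdel G x) D) {u u' : V}
    (h : AdjAllBut G u x) (h' : AdjAllBut G u' x) : u = u' := by
  have h1 := hU.unique (isGammaSet_vdel_singleton h) (isGammaSet_vdel_singleton h')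
  simpa using h1

theorem existsUnique_isGammaSet_vdel {u : V} (h : AdjAllBut G u x)
    (huniq : ∀ u', AdjAllBut G u' x → u' = u) : ∃! D, IsGammaSet (vdel G x) D := by
  refine ⟨{⟨u, h.1⟩}, isGammaSet_vdel_singleton h, ?_⟩
  rintro D ⟨hD, hcard⟩
  obtain ⟨s, rfl⟩ := Finset.card_eq_one.1 (hcard.trans (domNum_vdel_eq_one h))
  have hs := huniq s ((isDomSet_vdel_singleton_iff s).1 hD)
  rw [Finset.singleton_inj]
  exact Subtype.ext hs

/-- Without a single dominator, `γ(G - x) = 2`, so the pairs dominating `G - x` are its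
`γ`-sets. -/
theorem eq_of_isDomSetDel (hU : ∃! D, IsGammaSet (vdel G x) D) (hbad : ∀ u, ¬ AdjAllBut G u x)
    {E₁ E₂ : Finset V} (hx₁ : x ∉ E₁) (hx₂ : x ∉ E₂) (hc₁ : E₁.card = 2) (hc₂ : E₂.card = 2)
    (h₁ : IsDomSetDel G x E₁) (h₂ : IsDomSetDel G x E₂) : E₁ = E₂ := by
  have hdom : ∀ {E : Finset V}, x ∉ E → IsDomSetDel G x E →
      IsDomSet (vdel G x) (E.subtype (· ≠ x)) := by
    intro E hx hE v
    obtain ⟨u, hu, huv⟩ := hE v v.2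
    exact ⟨⟨u, ne_of_mem_of_not_mem hu hx⟩, Finset.mem_subtype.2 hu,
      huv.imp (fun h => Subtype.ext h) id⟩
  have hmap : ∀ {E : Finset V}, x ∉ E →
      (E.subtype (· ≠ x)).map (Function.Embedding.subtype _) = E :=
    fun hx => Finset.subtype_map_of_mem fun _ hu => ne_of_mem_of_not_mem hu hx
  have hcard : ∀ {E : Finset V}, x ∉ E → (E.subtype (· ≠ x)).card = E.card := fun hx => by
    rw [← Finset.card_map (Function.Embedding.subtype _), hmap hx]
  have hdomNum : domNum (vdel G x) = 2 := by
    obtain ⟨D, hD, hDcard⟩ := exists_isGammaSet (vdel G x)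
    have hne_one : D.card ≠ 1 := fun h1 => by
      obtain ⟨s, rfl⟩ := Finset.card_eq_one.1 h1
      exact hbad s ((isDomSet_vdel_singleton_iff s).1 hD)
    obtain ⟨u, hu⟩ := Finset.card_pos.1 (by omega : 0 < E₁.card)
    have : Nonempty {v : V // v ≠ x} := ⟨⟨u, ne_of_mem_of_not_mem hu hx₁⟩⟩
    have := hD.nonempty.card_pos
    have := domNum_le (hdom hx₁ h₁)
    rw [hcard hx₁, hc₁] at this
    omega
  have hγ : ∀ {E : Finset V}, x ∉ E → E.card = 2 → IsDomSetDel G x E →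
      IsGammaSet (vdel G x) (E.subtype (· ≠ x)) :=
    fun hx hc hE => ⟨hdom hx hE, by rw [hcard hx, hc, hdomNum]⟩
  rw [← hmap hx₁, ← hmap hx₂, hU.unique (hγ hx₁ hc₁ h₁) (hγ hx₂ hc₂ h₂)]

end Deletion

section DomNumTwo

variable {G : SimpleGraph V}

theorem not_isDomSet_singleton (h2 : domNum G = 2) (u : V) : ¬ IsDomSet G {u} := fun h => by
  simpa [h2] using domNum_le h

theorem AdjAllBut.not_adj (h2 : domNum G = 2) {u x : V} (h : AdjAllBut G u x) : ¬ G.Adj u x :=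
  fun hux => not_isDomSet_singleton h2 u fun v => by
    refine ⟨u, Finset.mem_singleton_self u, ?_⟩
    by_cases hvu : v = u
    · exact Or.inl hvu.symm
    by_cases hvx : v = x
    · exact Or.inr (hvx ▸ hux)
    · exact Or.inr (h.2 v hvu hvx)

theorem AdjAllBut.right_unique (h2 : domNum G = 2) {u x y : V} (h : AdjAllBut G u x)
    (h' : AdjAllBut G u y) : x = y := by
  by_contra hxy
  exact h'.not_adj h2 (h.2 y h'.1.symm (Ne.symm hxy))

variable [Fintype V] [DecidableEq V]

theorem exists_adjAllBut_of_notMem {v : V} (hU : ∃! D, IsGammaSet (vdel G v) D) {D₁ D₂ : Finset V}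
    (hD₁ : IsDomSet G D₁) (hD₂ : IsDomSet G D₂) (hc₁ : D₁.card = 2) (hc₂ : D₂.card = 2)
    (hne : D₁ ≠ D₂) (hv₁ : v ∉ D₁) (hv₂ : v ∉ D₂) : ∃ u, AdjAllBut G u v := by
  by_contra! hbad
  exact hne (eq_of_isDomSetDel hU hbad hv₁ hv₂ hc₁ hc₂ (hD₁.isDomSetDel v) (hD₂.isDomSetDel v))

/-- On three vertices, an edge `dv` would make both `d` and `v` dominate `G - x` for the third
vertex `x`. -/
theorem false_of_card_eq_three (h2 : domNum G = 2) (hU : ∀ x, ∃! D, IsGammaSet (vdel G x) D)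
    (hcard : Fintype.card V = 3) : False := by
  obtain ⟨D, hD, hDcard⟩ := exists_isGammaSet G
  obtain ⟨v, hv⟩ := exists_notMem_of_card_lt (s := D) (by omega)
  obtain ⟨d, hd, rfl | hdv⟩ := hD v
  · exact hv hd
  have hdv' := G.ne_of_adj hdv
  obtain ⟨x, hx⟩ := exists_notMem_of_card_lt (s := {d, v}) (by rw [Finset.card_pair hdv']; omega)
  simp only [Finset.mem_insert, Finset.mem_singleton, not_or] at hx
  have hall : ∀ w, w ∈ ({x, d, v} : Finset V) :=
    mem_of_card_le (by rw [hcard]; simp [Finset.card_insert_of_notMem, *])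
  have hd' : AdjAllBut G d x := ⟨Ne.symm hx.1, fun w hwd hwx => by
    have := hall w
    simp only [Finset.mem_insert, Finset.mem_singleton] at this
    rcases this with rfl | rfl | rfl
    exacts [absurd rfl hwx, absurd rfl hwd, hdv]⟩
  have hv' : AdjAllBut G v x := ⟨Ne.symm hx.2, fun w hwv hwx => by
    have := hall w
    simp only [Finset.mem_insert, Finset.mem_singleton] at this
    rcases this with rfl | rfl | rfl
    exacts [absurd rfl hwx, hdv.symm, absurd rfl hwv]⟩
  exact hdv' (hd'.eq_of_existsUnique (hU x) hv')

end DomNumTwo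

section BadVertex

variable [Fintype V] [DecidableEq V] {G : SimpleGraph V} {x₀ : V}

theorem eq_of_adj_of_adjAllBut (h2 : domNum G = 2) (hU₀ : ∃! D, IsGammaSet (vdel G x₀) D)
    (hbad : ∀ u, ¬ AdjAllBut G u x₀) {u y w : V} (h : AdjAllBut G u y) (hu : u ≠ x₀)
    (hy : y ≠ x₀) (hyw : G.Adj y w) : w = x₀ := by
  by_contra hw
  have hwu : w ≠ u := fun hwu => h.not_adj h2 (hwu ▸ hyw.symm)
  have heq := eq_of_isDomSetDel hU₀ hbad (by simp [Ne.symm hu, Ne.symm hy])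
    (by simp [Ne.symm hu, Ne.symm hw]) (Finset.card_pair h.1) (Finset.card_pair hwu.symm)
    ((h.isDomSet_pair (Or.inl rfl)).isDomSetDel x₀)
    ((h.isDomSet_pair (Or.inr hyw.symm)).isDomSetDel x₀)
  have hymem : y ∈ ({u, w} : Finset V) := heq ▸ by simp
  simp only [Finset.mem_insert, Finset.mem_singleton] at hymem
  rcases hymem with rfl | rfl
  exacts [h.1 rfl, G.irrefl hyw]

theorem eq_of_adjAllBut_of_adjAllBut (h2 : domNum G = 2) (hU₀ : ∃! D, IsGammaSet (vdel G x₀) D)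
    (hbad : ∀ u, ¬ AdjAllBut G u x₀) (hcard : 4 ≤ Fintype.card V) {u u' v v' : V}
    (h : AdjAllBut G u v) (h' : AdjAllBut G u' v') (hu : u ≠ x₀) (hu' : u' ≠ x₀) : v = v' := by
  have hv : v ≠ x₀ := fun hv => hbad u (hv ▸ h)
  have hv' : v' ≠ x₀ := fun hv' => hbad u' (hv' ▸ h')
  by_contra hvv'
  have heq := eq_of_isDomSetDel hU₀ hbad (by simp [Ne.symm hu, Ne.symm hv])
    (by simp [Ne.symm hu', Ne.symm hv']) (Finset.card_pair h.1) (Finset.card_pair h'.1)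
    ((h.isDomSet_pair (Or.inl rfl)).isDomSetDel x₀)
    ((h'.isDomSet_pair (Or.inl rfl)).isDomSetDel x₀)
  -- `{u, v} = {u', v'}` forces `v' = u`; but `v'` has no neighbour besides `x₀`, while `u` is
  -- adjacent to any fourth vertex
  have hv'u : v' = u := by
    have hmem : v' ∈ ({u, v} : Finset V) := heq ▸ by simp
    simp only [Finset.mem_insert, Finset.mem_singleton] at hmem
    exact hmem.resolve_right (Ne.symm hvv')
  obtain ⟨w, hw⟩ := exists_notMem_of_card_lt (s := {v, v', x₀})
    (Finset.card_le_three.trans_lt (by omega))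
  simp only [Finset.mem_insert, Finset.mem_singleton, not_or] at hw
  exact hw.2.2 (eq_of_adj_of_adjAllBut h2 hU₀ hbad h' hu' hv'
    (hv'u ▸ h.2 w (hv'u ▸ hw.2.1) hw.1))

/-- With four vertices, an edge `pq` of `G - x₀` and the fourth vertex `r` give two dominating
pairs `{p, r}`, `{q, r}` of `G - x₀`. -/
theorem not_adj_of_card_eq_four (hU₀ : ∃! D, IsGammaSet (vdel G x₀) D)
    (hbad : ∀ u, ¬ AdjAllBut G u x₀) (hcard : Fintype.card V = 4) {p q : V} (hp : p ≠ x₀)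
    (hq : q ≠ x₀) : ¬ G.Adj p q := by
  intro hpq
  obtain ⟨r, hr⟩ := exists_notMem_of_card_lt (s := {x₀, p, q})
    (Finset.card_le_three.trans_lt (by omega))
  simp only [Finset.mem_insert, Finset.mem_singleton, not_or] at hr
  obtain ⟨hrx, hrp, hrq⟩ := hr
  have hcover : ∀ w, w ≠ x₀ → w = p ∨ w = q ∨ w = r := fun w hw => by
    have := mem_of_card_le (s := {x₀, p, q, r}) (by rw [hcard]; grind [G.ne_of_adj hpq]) w
    simp only [Finset.mem_insert, Finset.mem_singleton] at this
    tauto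
  have hdom : ∀ {a b}, G.Adj a b → (∀ w, w ≠ x₀ → w = a ∨ w = b ∨ w = r) →
      IsDomSetDel G x₀ {a, r} := by
    intro a b hab hcov w hw
    rcases hcov w hw with rfl | rfl | rfl
    · exact ⟨w, by simp, Or.inl rfl⟩
    · exact ⟨a, by simp, Or.inr hab⟩
    · exact ⟨w, by simp, Or.inl rfl⟩
  have heq := eq_of_isDomSetDel hU₀ hbad (by simp [Ne.symm hp, Ne.symm hrx])
    (by simp [Ne.symm hq, Ne.symm hrx]) (Finset.card_pair (Ne.symm hrp))
    (Finset.card_pair (Ne.symm hrq)) (hdom hpq hcover)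
    (hdom hpq.symm fun w hw => by rcases hcover w hw with h | h | h <;> simp [h])
  have hpmem : p ∈ ({q, r} : Finset V) := heq ▸ by simp
  simp only [Finset.mem_insert, Finset.mem_singleton] at hpmem
  rcases hpmem with h | h
  exacts [G.ne_of_adj hpq h, hrp h.symm]

/-- By `not_adj_of_card_eq_four`, `G - x₀` has no edge, so every `γ`-set contains `x₀`, and then
`x₀` alone would dominate `G`. -/
theorem false_of_card_eq_four (h2 : domNum G = 2) (hU₀ : ∃! D, IsGammaSet (vdel G x₀) D)
    (hbad : ∀ u, ¬ AdjAllBut G u x₀) (hcard : Fintype.card V = 4) {D₁ D₂ : Finset V}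
    (hD₁ : IsGammaSet G D₁) (hD₂ : IsGammaSet G D₂) (hne : D₁ ≠ D₂) : False := by
  have hedge : ∀ {p q}, p ≠ x₀ → q ≠ x₀ → ¬ G.Adj p q := not_adj_of_card_eq_four hU₀ hbad hcard
  have hmem : ∀ {D}, IsGammaSet G D → x₀ ∈ D := by
    intro D hD
    by_contra hx
    obtain ⟨v, hv⟩ := exists_notMem_of_card_lt (s := insert x₀ D)
      (by rw [Finset.card_insert_of_notMem hx, hD.2, h2, hcard]; omega)
    rw [Finset.mem_insert, not_or] at hv
    obtain ⟨d, hd, rfl | hdv⟩ := hD.1 v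
    · exact hv.2 hd
    · exact hedge (ne_of_mem_of_not_mem hd hx) hv.1 hdv
  refine not_isDomSet_singleton h2 x₀ fun v => ⟨x₀, Finset.mem_singleton_self x₀, ?_⟩
  by_contra! hv
  have hvmem : ∀ {D}, IsDomSet G D → v ∈ D := by
    intro D hD
    obtain ⟨d, hd, rfl | hdv⟩ := hD v
    · exact hd
    by_cases hdx : d = x₀
    · exact absurd (hdx ▸ hdv) hv.2
    · exact absurd hdv (hedge hdx (Ne.symm hv.1))
  have hpair : ∀ {D}, IsGammaSet G D → D = {x₀, v} := fun hD =>
    (Finset.eq_of_subset_of_card_le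
      (Finset.insert_subset (hmem hD) (Finset.singleton_subset_iff.2 (hvmem hD.1)))
      (by rw [hD.2, h2, Finset.card_pair hv.1])).symm
  exact hne ((hpair hD₁).trans (hpair hD₂).symm)

/-- A vertex `v ∉ D₁ ∪ D₂` has a dominator of `G - v`, necessarily not `x₀`, so `N(v) ⊆ {x₀}` and
`x₀ ∈ D₁ ∩ D₂`; this leaves room for two such vertices, against
`eq_of_adjAllBut_of_adjAllBut`. -/
theorem false_of_forall_not_adjAllBut (h2 : domNum G = 2)
    (hU : ∀ x, ∃! D, IsGammaSet (vdel G x) D) (hbad : ∀ u, ¬ AdjAllBut G u x₀)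
    (hx₀ : ∀ y, ¬ AdjAllBut G x₀ y) (hcard : 5 ≤ Fintype.card V) {D₁ D₂ : Finset V}
    (hD₁ : IsGammaSet G D₁) (hD₂ : IsGammaSet G D₂) (hne : D₁ ≠ D₂) : False := by
  have hc₁ : D₁.card = 2 := hD₁.2.trans h2
  have hc₂ : D₂.card = 2 := hD₂.2.trans h2
  have hout : ∀ v, v ∉ D₁ ∪ D₂ → ∃ u, AdjAllBut G u v ∧ u ≠ x₀ := by
    intro v hv
    rw [Finset.mem_union, not_or] at hv
    obtain ⟨u, hu⟩ := exists_adjAllBut_of_notMem (hU v) hD₁.1 hD₂.1 hc₁ hc₂ hne hv.1 hv.2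
    exact ⟨u, hu, fun h => hx₀ v (h ▸ hu)⟩
  obtain ⟨v₁, hv₁⟩ := exists_notMem_of_card_lt (s := D₁ ∪ D₂)
    ((Finset.card_union_le _ _).trans_lt (by omega))
  obtain ⟨u₁, hu₁, hu₁x⟩ := hout v₁ hv₁
  have hv₁x : v₁ ≠ x₀ := fun h => hbad u₁ (h ▸ hu₁)
  have hmem : ∀ {D}, IsDomSet G D → v₁ ∉ D → x₀ ∈ D := by
    intro D hD hv
    obtain ⟨d, hd, rfl | hdv⟩ := hD v₁
    · exact absurd hd hv
    · rwa [← eq_of_adj_of_adjAllBut h2 (hU x₀) hbad hu₁ hu₁x hv₁x hdv.symm]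
  rw [Finset.mem_union, not_or] at hv₁
  have hinter : 1 ≤ (D₁ ∩ D₂).card :=
    Finset.card_pos.2 ⟨x₀, Finset.mem_inter.2 ⟨hmem hD₁.1 hv₁.1, hmem hD₂.1 hv₁.2⟩⟩
  have hunion := Finset.card_union_add_card_inter D₁ D₂
  obtain ⟨v₂, hv₂⟩ := exists_notMem_of_card_lt (s := insert v₁ (D₁ ∪ D₂))
    ((Finset.card_insert_le _ _).trans_lt (by omega))
  rw [Finset.mem_insert, not_or] at hv₂
  obtain ⟨u₂, hu₂, hu₂x⟩ := hout v₂ hv₂.2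
  exact hv₂.1 (eq_of_adjAllBut_of_adjAllBut h2 (hU x₀) hbad (by omega) hu₂ hu₁ hu₂x hu₁x)

/-- If `xb` has no neighbour, every dominating set contains `xb` and its partner in a `γ`-set
dominates `G - xb`. -/
theorem false_of_forall_not_adj {xb : V} (h2 : domNum G = 2) (hU : ∃! D, IsGammaSet (vdel G xb) D)
    (hxb : ∀ w, ¬ G.Adj w xb) {D₁ D₂ : Finset V} (hD₁ : IsGammaSet G D₁)
    (hD₂ : IsGammaSet G D₂) (hne : D₁ ≠ D₂) : False := by
  have hpair : ∀ {D}, IsGammaSet G D → ∃ w, AdjAllBut G w xb ∧ D = {xb, w} := by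
    intro D hD
    have hxbD : xb ∈ D := by
      obtain ⟨d, hd, rfl | hd'⟩ := hD.1 xb
      exacts [hd, absurd hd' (hxb d)]
    obtain ⟨w, hw, rfl⟩ : ∃ w, w ≠ xb ∧ D = {xb, w} := by
      obtain ⟨a, b, hab, rfl⟩ := Finset.card_eq_two.1 (hD.2.trans h2)
      simp only [Finset.mem_insert, Finset.mem_singleton] at hxbD
      rcases hxbD with rfl | rfl
      exacts [⟨b, hab.symm, rfl⟩, ⟨a, hab, Finset.pair_comm _ _⟩]
    refine ⟨w, ⟨hw, fun z hzw hzxb => ?_⟩, rfl⟩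
    obtain ⟨d, hd, hdz⟩ := hD.1 z
    simp only [Finset.mem_insert, Finset.mem_singleton] at hd
    rcases hd with rfl | rfl
    · exact absurd (hdz.resolve_left (Ne.symm hzxb)).symm (hxb z)
    · exact hdz.resolve_left (Ne.symm hzw)
  obtain ⟨w₁, hw₁, rfl⟩ := hpair hD₁
  obtain ⟨w₂, hw₂, rfl⟩ := hpair hD₂
  exact hne (by rw [hw₁.eq_of_existsUnique hU hw₂])

/-- A vertex `t ∉ {x₀, xb}` either has a dominator of `G - t`, which is not `x₀`, or forces
`N(xb) ⊆ {t}`. Two vertices of the first kind contradict `eq_of_adjAllBut_of_adjAllBut`; two of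
the second kind leave `xb` isolated. -/
theorem false_of_adjAllBut (h2 : domNum G = 2) (hU : ∀ x, ∃! D, IsGammaSet (vdel G x) D)
    (hbad : ∀ u, ¬ AdjAllBut G u x₀) {xb : V} (hx₀ : AdjAllBut G x₀ xb)
    (hcard : 5 ≤ Fintype.card V) {D₁ D₂ : Finset V} (hD₁ : IsGammaSet G D₁)
    (hD₂ : IsGammaSet G D₂) (hne : D₁ ≠ D₂) : False := by
  have hkey : ∀ t t', t ∉ ({x₀, xb} : Finset V) → t' ∉ ({x₀, xb} : Finset V) → t ≠ t' →
      ((∃ u, AdjAllBut G u t) ↔ (∃ u, AdjAllBut G u t')) → False := by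
    intro t t' ht ht' htt' hiff
    by_cases hgood : ∃ u, AdjAllBut G u t
    · obtain ⟨u, hu⟩ := hgood
      obtain ⟨u', hu'⟩ := hiff.1 ⟨u, hu⟩
      have hne₀ : ∀ {s v}, s ∉ ({x₀, xb} : Finset V) → AdjAllBut G v s → v ≠ x₀ :=
        fun hs hv h => hs (by simp [(h ▸ hv).right_unique h2 hx₀])
      exact htt' (eq_of_adjAllBut_of_adjAllBut h2 (hU x₀) hbad (by omega) hu hu'
        (hne₀ ht hu) (hne₀ ht' hu'))
    · have hbt : ∀ u, ¬ AdjAllBut G u t := fun u hu => hgood ⟨u, hu⟩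
      have hbt' : ∀ u, ¬ AdjAllBut G u t' := fun u hu => hgood (hiff.2 ⟨u, hu⟩)
      have hnbr : ∀ {s}, s ∉ ({x₀, xb} : Finset V) → (∀ u, ¬ AdjAllBut G u s) →
          ∀ w, G.Adj w xb → w = s := fun hs hbs w hw => by
        simp only [Finset.mem_insert, Finset.mem_singleton, not_or] at hs
        exact eq_of_adj_of_adjAllBut h2 (hU _) hbs hx₀ (Ne.symm hs.1) (Ne.symm hs.2) hw.symm
      exact false_of_forall_not_adj h2 (hU xb)
        (fun w hw => htt' ((hnbr ht hbt w hw).symm.trans (hnbr ht' hbt' w hw))) hD₁ hD₂ hne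
  obtain ⟨s, hs, hs3⟩ := Finset.exists_subset_card_eq (s := ({x₀, xb} : Finset V)ᶜ) (n := 3)
    (by rw [Finset.card_compl, Finset.card_pair hx₀.1]; omega)
  obtain ⟨t₁, t₂, t₃, h₁₂, h₁₃, h₂₃, rfl⟩ := Finset.card_eq_three.1 hs3
  have hmem : ∀ {t}, t ∈ ({t₁, t₂, t₃} : Finset V) → t ∉ ({x₀, xb} : Finset V) :=
    fun ht => Finset.mem_compl.1 (hs ht)
  by_cases h₂₃' : (∃ u, AdjAllBut G u t₂) ↔ (∃ u, AdjAllBut G u t₃)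
  · exact hkey t₂ t₃ (hmem (by simp)) (hmem (by simp)) h₂₃ h₂₃'
  by_cases h₁₂' : (∃ u, AdjAllBut G u t₁) ↔ (∃ u, AdjAllBut G u t₂)
  · exact hkey t₁ t₂ (hmem (by simp)) (hmem (by simp)) h₁₂ h₁₂'
  · exact hkey t₁ t₃ (hmem (by simp)) (hmem (by simp)) h₁₃ (by tauto)

end BadVertex

theorem exists_adjAllBut [Fintype V] [DecidableEq V] {G : SimpleGraph V} (h2 : domNum G = 2)
    (hud : HypoUD G) (x₀ : V) : ∃ u, AdjAllBut G u x₀ := by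
  obtain ⟨⟨D₁, D₂, hD₁, hD₂, hne⟩, hU⟩ := hud
  have h3 := three_le_card_of_ne (hD₁.2.trans h2) (hD₂.2.trans h2) hne
  by_contra! hbad
  obtain h3 | h4 := h3.eq_or_lt
  · exact false_of_card_eq_three h2 hU h3.symm
  obtain h4 | h5 := (Nat.succ_le_of_lt h4).eq_or_lt
  · exact false_of_card_eq_four h2 (hU x₀) hbad h4.symm hD₁ hD₂ hne
  by_cases hx₀ : ∃ xb, AdjAllBut G x₀ xb
  · obtain ⟨xb, hxb⟩ := hx₀
    exact false_of_adjAllBut h2 hU hbad hxb h5 hD₁ hD₂ hne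
  · push Not at hx₀
    exact false_of_forall_not_adjAllBut h2 hU hbad hx₀ h5 hD₁ hD₂ hne

/-- `G` is `K_n` minus the perfect matching `{{x, f x}}`. -/
structure IsCocktailParty (G : SimpleGraph V) (f : V → V) : Prop where
  involutive : Function.Involutive f
  ne_self : ∀ x, f x ≠ x
  adj_iff : ∀ x y, G.Adj x y ↔ x ≠ y ∧ y ≠ f x

namespace IsCocktailParty

variable {G : SimpleGraph V} {f : V → V}

theorem adjAllBut (hf : IsCocktailParty G f) (x : V) : AdjAllBut G (f x) x :=
  ⟨hf.ne_self x, fun w hw hwx => (hf.adj_iff _ _).2 ⟨Ne.symm hw, by rwa [hf.involutive]⟩⟩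

theorem eq_of_adjAllBut (hf : IsCocktailParty G f) {u x : V} (h : AdjAllBut G u x) : u = f x := by
  have hfu : f u = x := by
    by_contra hfu
    exact ((hf.adj_iff _ _).1 (h.2 (f u) (hf.ne_self u) hfu)).2 rfl
  rw [← hfu, hf.involutive]

theorem comap {W : Type*} {G' : SimpleGraph W} {f' : W → W} (hf : IsCocktailParty G' f')
    (e : G ≃g G') : IsCocktailParty G (e.symm ∘ f' ∘ e) where
  involutive x := by simp [hf.involutive (e x)]
  ne_self x h := hf.ne_self (e x) (by simpa using congrArg e h)
  adj_iff x y := by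
    rw [← e.map_adj_iff, hf.adj_iff, e.injective.ne_iff]
    exact and_congr_right' (not_congr e.eq_symm_apply.symm)

variable [Fintype V] [DecidableEq V]

theorem exists_iso (hf : IsCocktailParty G f) :
    ∃ m, Fintype.card V = 2 * m ∧ Nonempty (G ≃g completeMinusPM m) := by
  let p : V → Sym2 V := fun x => s(x, f x)
  have hp : ∀ x y, p y = p x ↔ y = x ∨ y = f x := by
    intro x y
    simp only [p, Sym2.eq_iff]
    constructor
    · rintro (⟨rfl, -⟩ | ⟨rfl, -⟩)
      exacts [Or.inl rfl, Or.inr rfl]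
    · rintro (rfl | rfl)
      exacts [Or.inl ⟨rfl, rfl⟩, Or.inr ⟨rfl, hf.involutive x⟩]
  let π := Set.rangeFactorization p
  have hfib : ∀ q, Fintype.card {y // π y = q} = 2 := by
    rintro ⟨_, x, rfl⟩
    have hmem : ∀ y, π y = ⟨p x, x, rfl⟩ ↔ y ∈ ({x, f x} : Finset V) := by
      intro y
      rw [Subtype.ext_iff, Finset.mem_insert, Finset.mem_singleton]
      exact hp x y
    rw [Fintype.card_congr (Equiv.subtypeEquivRight hmem), Fintype.card_coe,
      Finset.card_pair (hf.ne_self x).symm]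
  let e : V ≃ Set.range p × Fin 2 := (Equiv.sigmaFiberEquiv π).symm.trans
    ((Equiv.sigmaCongrRight fun q => Fintype.equivFinOfCardEq (hfib q)).trans
      (Equiv.sigmaEquivProd _ _))
  let σ := Fintype.equivFin (Set.range p)
  refine ⟨Fintype.card (Set.range p), ?_, ⟨⟨e.trans (σ.prodCongr (Equiv.refl _)), ?_⟩⟩⟩
  · rw [Fintype.card_congr e, Fintype.card_prod, Fintype.card_fin, mul_comm]
  · intro a b
    change σ (π a) ≠ σ (π b) ↔ G.Adj a b
    rw [σ.injective.ne_iff, hf.adj_iff, Ne, Subtype.ext_iff]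
    have hsymm : a = f b ↔ b = f a :=
      ⟨fun h => h ▸ (hf.involutive b).symm, fun h => h ▸ (hf.involutive a).symm⟩
    simp only [π, Set.rangeFactorization_coe, hp, not_or, hsymm]

theorem hypoUD_and_domNum_eq_two (hf : IsCocktailParty G f) (hcard : 4 ≤ Fintype.card V) :
    HypoUD G ∧ domNum G = 2 := by
  have hpair : ∀ {a b}, b ≠ a → b ≠ f a → IsDomSet G {a, b} := by
    intro a b hba hbfa
    have ha := hf.adjAllBut (f a)
    rw [hf.involutive a] at ha
    exact ha.isDomSet_pair
      (Or.inr ((hf.adj_iff _ _).2 ⟨hbfa, hf.involutive.injective.ne (Ne.symm hba)⟩))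
  have hsingle : ∀ s, ¬ IsDomSet G {s} := by
    intro s h
    obtain ⟨d, hd, hds⟩ := h (f s)
    rw [Finset.mem_singleton] at hd
    subst hd
    rcases hds with h | h
    exacts [hf.ne_self d h.symm, ((hf.adj_iff _ _).1 h).2 rfl]
  have hV : Nonempty V := Fintype.card_pos_iff.1 (by omega)
  obtain ⟨a⟩ := id hV
  obtain ⟨b, hb⟩ := exists_notMem_of_card_lt (s := {a, f a})
    (Finset.card_le_two.trans_lt (by omega))
  obtain ⟨b', hb'⟩ := exists_notMem_of_card_lt (s := {a, f a, b})
    (Finset.card_le_three.trans_lt (by omega))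
  simp only [Finset.mem_insert, Finset.mem_singleton, not_or] at hb hb'
  have h2 := domNum_eq_two (Ne.symm hb.1) (hpair hb.1 hb.2) hsingle
  have hγ : ∀ {c}, c ≠ a → c ≠ f a → IsGammaSet G {a, c} :=
    fun hca hcfa => ⟨hpair hca hcfa, by rw [Finset.card_pair (Ne.symm hca), h2]⟩
  refine ⟨⟨⟨{a, b}, {a, b'}, hγ hb.1 hb.2, hγ hb'.1 hb'.2.1, fun h => ?_⟩, fun x => ?_⟩, h2⟩
  · have hbmem : b ∈ ({a, b'} : Finset V) := h ▸ by simp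
    simp only [Finset.mem_insert, Finset.mem_singleton] at hbmem
    rcases hbmem with h | h
    exacts [hb.1 h, hb'.2.2 h.symm]
  · exact existsUnique_isGammaSet_vdel (hf.adjAllBut x) fun u hu => hf.eq_of_adjAllBut hu

end IsCocktailParty

theorem exists_isCocktailParty [Fintype V] [DecidableEq V] {G : SimpleGraph V}
    (h2 : domNum G = 2) (hud : HypoUD G) : ∃ f, IsCocktailParty G f := by
  choose f hf using exists_adjAllBut h2 hud
  have hinj : Function.Injective f := fun x y hxy => (hf x).right_unique h2 (hxy ▸ hf y)
  have hinv : Function.Involutive f := by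
    intro x
    obtain ⟨y, rfl⟩ := Finite.injective_iff_surjective.1 hinj x
    congr 1
    by_contra hne
    exact (hf (f y)).not_adj h2 ((hf y).2 (f (f y)) (hf (f y)).1 hne).symm
  refine ⟨f, hinv, fun x => (hf x).1, fun x y => ⟨fun h => ⟨G.ne_of_adj h, ?_⟩, ?_⟩⟩
  · rintro rfl
    exact (hf x).not_adj h2 h.symm
  · rintro ⟨hxy, hyfx⟩
    have hx := hf (f x)
    rw [hinv x] at hx
    exact hx.2 y (Ne.symm hxy) hyfx

theorem isCocktailParty_completeMinusPM (m : ℕ) :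
    IsCocktailParty (completeMinusPM m) (fun a => (a.1, Fin.rev a.2)) where
  involutive a := by simp
  ne_self a h := (by decide : ∀ j : Fin 2, Fin.rev j ≠ j) a.2 (congrArg Prod.snd h)
  adj_iff a b := by
    obtain ⟨i, j⟩ := a
    obtain ⟨k, l⟩ := b
    have : ∀ j l : Fin 2, l = j ∨ l = Fin.rev j := by decide
    simp only [completeMinusPM, ne_eq, Prod.mk.injEq, not_and]
    constructor
    · intro h
      exact ⟨fun h' => absurd h' h, fun h' => absurd h'.symm h⟩
    · rintro ⟨h₁, h₂⟩ rfl
      rcases this j l with rfl | rfl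
      exacts [h₁ rfl rfl, h₂ rfl rfl]

theorem hypoUD_domNum_two [Fintype V] [DecidableEq V] (G : SimpleGraph V) :
    (HypoUD G ∧ domNum G = 2) ↔
      ∃ m : ℕ, 2 ≤ m ∧ Nonempty (G ≃g completeMinusPM m) := by
  constructor
  · rintro ⟨hud, h2⟩
    obtain ⟨f, hf⟩ := exists_isCocktailParty h2 hud
    obtain ⟨m, hm, hiso⟩ := hf.exists_iso
    obtain ⟨⟨D₁, D₂, hD₁, hD₂, hne⟩, -⟩ := hud
    have := three_le_card_of_ne (hD₁.2.trans h2) (hD₂.2.trans h2) hne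
    exact ⟨m, by omega, hiso⟩
  · rintro ⟨m, hm, ⟨e⟩⟩
    refine ((isCocktailParty_completeMinusPM m).comap e).hypoUD_and_domNum_eq_two ?_
    have := Fintype.card_congr e.toEquiv
    simp only [Fintype.card_prod, Fintype.card_fin] at this
    omega
end

section
/- If G is a hypo-unique-domination graph, then its bondage number satisfies b(G) ≤ δ(G) + 1. -/
open SimpleGraph

variable {V : Type*}

/-- The bondage number of `G`: the minimum number of edges whose removal
increases the domination number. -/
noncomputable def bondage (G : SimpleGraph V) : ℕ :=
  sInf {k | ∃ s : Finset (Sym2 V), ↑s ⊆ G.edgeSet ∧ s.card = k ∧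
    domNum G < domNum (G.deleteEdges ↑s)}

set_option linter.unusedSectionVars false

section Aux
variable {W : Type*} [Fintype W] [DecidableEq W]

lemma isDomSet_univ_s10 (H : SimpleGraph W) : IsDomSet H Finset.univ :=
  fun v => ⟨v, Finset.mem_univ v, Or.inl rfl⟩

lemma domNum_le' {H : SimpleGraph W} {D : Finset W} (hD : IsDomSet H D) :
    domNum H ≤ D.card :=
  Nat.sInf_le ⟨D, hD, rfl⟩

lemma exists_gammaSet (H : SimpleGraph W) : ∃ D : Finset W, IsGammaSet H D := by
  have h : (domNum H) ∈ {n | ∃ D : Finset W, IsDomSet H D ∧ D.card = n} :=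
    Nat.sInf_mem ⟨Finset.univ.card, Finset.univ, isDomSet_univ_s10 H, rfl⟩
  obtain ⟨D, hD, hc⟩ := h
  exact ⟨D, hD, hc⟩

lemma IsDomSet.mono' {H G : SimpleGraph W} (h : H ≤ G) {D : Finset W}
    (hD : IsDomSet H D) : IsDomSet G D := fun v => by
  obtain ⟨u, hu, h'⟩ := hD v
  exact ⟨u, hu, h'.imp id (fun ha => h ha)⟩

lemma domNum_anti {H G : SimpleGraph W} (h : H ≤ G) : domNum G ≤ domNum H := by
  obtain ⟨D, hD, hc⟩ := exists_gammaSet H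
  exact hc ▸ domNum_le' (hD.mono' h)

lemma unique_gamma_edge (H : SimpleGraph W) (hne : H.edgeSet.Nonempty)
    (hu : ∃! D : Finset W, IsGammaSet H D) :
    ∃ e ∈ H.edgeSet, domNum H < domNum (H.deleteEdges {e}) := by
  classical
  obtain ⟨D, hD, huniq⟩ := hu
  obtain ⟨u₀, v₀, h00⟩ : ∃ a b, H.Adj a b := by
    obtain ⟨e, he⟩ := hne
    revert he
    induction e using Sym2.ind with
    | _ a b => exact fun he => ⟨a, b, he⟩
  -- there is a vertex outside D
  have hout : ∃ v, v ∉ D := by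
    by_contra hall
    push_neg at hall
    have hdomset : IsDomSet H (Finset.univ.erase v₀) := by
      intro w
      by_cases hw : w = v₀
      · exact ⟨u₀, Finset.mem_erase.mpr ⟨h00.ne, Finset.mem_univ _⟩, Or.inr (hw ▸ h00)⟩
      · exact ⟨w, Finset.mem_erase.mpr ⟨hw, Finset.mem_univ _⟩, Or.inl rfl⟩
    have h1 : domNum H ≤ (Finset.univ.erase v₀).card := domNum_le' hdomset
    have h2 : D = Finset.univ := Finset.eq_univ_iff_forall.mpr hall
    have h3 : (Finset.univ.erase v₀).card = Finset.univ.card - 1 :=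
      Finset.card_erase_of_mem (Finset.mem_univ _)
    have h4 : 0 < Finset.univ.card := Finset.card_pos.mpr ⟨v₀, Finset.mem_univ _⟩
    have h5 : D.card = domNum H := hD.2
    rw [h2] at h5
    omega
  -- every vertex outside D has a neighbor in D
  have hnbr : ∀ v ∉ D, (D.filter (fun u => H.Adj u v)).Nonempty := by
    intro v hv
    obtain ⟨u, hu, hor⟩ := hD.1 v
    rcases hor with rfl | hadj
    · exact absurd hu hv
    · exact ⟨u, Finset.mem_filter.mpr ⟨hu, hadj⟩⟩
  -- there is a vertex outside D with exactly one neighbor in D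
  have hone : ∃ v ∉ D, (D.filter (fun u => H.Adj u v)).card = 1 := by
    by_contra hc
    push_neg at hc
    have htwo : ∀ v ∉ D, 1 < (D.filter (fun u => H.Adj u v)).card := by
      intro v hv
      have := Finset.card_pos.mpr (hnbr v hv)
      have := hc v hv
      omega
    obtain ⟨v₁, hv₁⟩ := hout
    obtain ⟨u, hu⟩ := hnbr v₁ hv₁
    rw [Finset.mem_filter] at hu
    obtain ⟨huD, huv⟩ := hu
    by_cases hDnbr : ∃ w ∈ D, H.Adj u w
    · -- D.erase u is a smaller dominating set
      obtain ⟨w, hwD, hwadj⟩ := hDnbr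
      have hdom : IsDomSet H (D.erase u) := by
        intro z
        by_cases hz : z ∈ D
        · by_cases hzu : z = u
          · exact ⟨w, Finset.mem_erase.mpr ⟨fun hh => by subst hh; exact H.irrefl (hzu ▸ hwadj), hwD⟩,
              Or.inr (hzu ▸ hwadj.symm)⟩
          · exact ⟨z, Finset.mem_erase.mpr ⟨hzu, hz⟩, Or.inl rfl⟩
        · obtain ⟨b, hb, hbu⟩ := Finset.exists_mem_ne (htwo z hz) u
          rw [Finset.mem_filter] at hb
          exact ⟨b, Finset.mem_erase.mpr ⟨hbu, hb.1⟩, Or.inr hb.2⟩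
      have h1 : domNum H ≤ (D.erase u).card := domNum_le' hdom
      have h2 : (D.erase u).card = D.card - 1 := Finset.card_erase_of_mem huD
      have h3 : 0 < D.card := Finset.card_pos.mpr ⟨u, huD⟩
      have h4 : D.card = domNum H := hD.2
      omega
    · -- swap u for v₁ to get a different γ-set
      push_neg at hDnbr
      set D' := insert v₁ (D.erase u) with hD'
      have hdom : IsDomSet H D' := by
        intro z
        by_cases hzv : z = v₁
        · exact ⟨v₁, Finset.mem_insert_self _ _, Or.inl hzv.symm⟩
        by_cases hz : z ∈ D
        · by_cases hzu : z = u
          · exact ⟨v₁, Finset.mem_insert_self _ _, Or.inr (hzu ▸ huv.symm)⟩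
          · exact ⟨z, Finset.mem_insert_of_mem (Finset.mem_erase.mpr ⟨hzu, hz⟩), Or.inl rfl⟩
        · obtain ⟨b, hb, hbu⟩ := Finset.exists_mem_ne (htwo z hz) u
          rw [Finset.mem_filter] at hb
          exact ⟨b, Finset.mem_insert_of_mem (Finset.mem_erase.mpr ⟨hbu, hb.1⟩), Or.inr hb.2⟩
      have hv₁ne : v₁ ∉ D.erase u := fun hh => hv₁ (Finset.mem_of_mem_erase hh)
      have hcard : D'.card = D.card := by
        rw [hD', Finset.card_insert_of_notMem hv₁ne, Finset.card_erase_of_mem huD]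
        have : 0 < D.card := Finset.card_pos.mpr ⟨u, huD⟩
        omega
      have hgam : IsGammaSet H D' := ⟨hdom, hcard.trans hD.2⟩
      have : D' = D := huniq D' hgam
      have hu' : u ∉ D' := by
        rw [hD']
        intro hh
        rcases Finset.mem_insert.mp hh with rfl | hh
        · exact hv₁ huD
        · exact (Finset.mem_erase.mp hh).1 rfl
      exact hu' (this ▸ huD)
  obtain ⟨v, hv, hcard1⟩ := hone
  obtain ⟨u, hufilt⟩ := hnbr v hv
  have hufilt' := Finset.mem_filter.mp hufilt
  refine ⟨s(u, v), H.mem_edgeSet.mpr hufilt'.2, ?_⟩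
  have hle : domNum H ≤ domNum (H.deleteEdges {s(u, v)}) :=
    domNum_anti (H.deleteEdges_le _)
  rcases lt_or_eq_of_le hle with hlt | heqq
  · exact hlt
  exfalso
  obtain ⟨D', hD', hc'⟩ := exists_gammaSet (H.deleteEdges {s(u, v)})
  have hDG : IsGammaSet H D' := ⟨hD'.mono' (H.deleteEdges_le _), by rw [hc', ← heqq]⟩
  have hDD : D' = D := huniq D' hDG
  obtain ⟨w, hwD, hwor⟩ := hD' v
  rw [hDD] at hwD
  rcases hwor with rfl | hwadj
  · exact hv hwD
  · have hwadj' : H.Adj w v ∧ s(w, v) ∉ ({s(u, v)} : Set (Sym2 W)) := by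
      simpa [SimpleGraph.deleteEdges_adj] using hwadj
    have hwmem : w ∈ D.filter (fun u => H.Adj u v) :=
      Finset.mem_filter.mpr ⟨hwD, hwadj'.1⟩
    obtain ⟨a, ha⟩ := Finset.card_eq_one.mp hcard1
    rw [ha, Finset.mem_singleton] at hwmem hufilt
    exact hwadj'.2 (by rw [hwmem, hufilt]; exact Set.mem_singleton _)

end Aux

section Aux2
variable [Fintype V] [DecidableEq V]

lemma isolated_lower (G' : SimpleGraph V) (x : V)
    (hx : ∀ v, ¬ G'.Adj x v) :
    domNum (vdel G' x) + 1 ≤ domNum G' := by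
  classical
  obtain ⟨D, hD, hcard⟩ := exists_gammaSet G'
  have hxD : x ∈ D := by
    obtain ⟨u, hu, hor⟩ := hD x
    rcases hor with rfl | hadj
    · exact hu
    · exact absurd hadj.symm (hx u)
  set D' : Finset {u : V // u ≠ x} := (D.erase x).subtype (· ≠ x) with hD'
  have hdom : IsDomSet (vdel G' x) D' := by
    rintro ⟨v, hv⟩
    obtain ⟨u, hu, hor⟩ := hD v
    have hux : u ≠ x := by
      rcases hor with rfl | hadj
      · exact hv
      · exact fun hh => hx v (hh ▸ hadj)
    refine ⟨⟨u, hux⟩, ?_, ?_⟩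
    · rw [hD', Finset.mem_subtype]
      exact Finset.mem_erase.mpr ⟨hux, hu⟩
    · rcases hor with rfl | hadj
      · exact Or.inl rfl
      · exact Or.inr hadj
  have hc' : D'.card = D.card - 1 := by
    rw [hD', Finset.card_subtype,
      Finset.filter_true_of_mem (fun a ha => (Finset.mem_erase.mp ha).1),
      Finset.card_erase_of_mem hxD]
  have h1 : domNum (vdel G' x) ≤ D'.card := domNum_le' hdom
  have h2 : 0 < D.card := Finset.card_pos.mpr ⟨x, hxD⟩
  omega

lemma domNum_le_vdel (G : SimpleGraph V) (x : V) :
    domNum G ≤ domNum (vdel G x) + 1 := by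
  classical
  obtain ⟨D, hD, hcard⟩ := exists_gammaSet (vdel G x)
  set D' : Finset V := insert x (D.image Subtype.val) with hD'
  have hdom : IsDomSet G D' := by
    intro v
    by_cases hv : v = x
    · exact ⟨x, Finset.mem_insert_self _ _, Or.inl hv.symm⟩
    · obtain ⟨u, hu, hor⟩ := hD ⟨v, hv⟩
      refine ⟨↑u, Finset.mem_insert_of_mem (Finset.mem_image.mpr ⟨u, hu, rfl⟩), ?_⟩
      rcases hor with rfl | hadj
      · exact Or.inl rfl
      · exact Or.inr hadj
  calc domNum G ≤ D'.card := domNum_le' hdom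
    _ ≤ (D.image Subtype.val).card + 1 := Finset.card_insert_le _ _
    _ ≤ D.card + 1 := by have := Finset.card_image_le (s := D) (f := Subtype.val); omega
    _ = domNum (vdel G x) + 1 := by rw [hcard]

lemma map_edge_mem {W : Type*} {f : W → V} {G : SimpleGraph V} {e : Sym2 W}
    (he : e ∈ (G.comap f).edgeSet) : Sym2.map f e ∈ G.edgeSet := by
  revert he
  induction e using Sym2.ind with
  | _ a b => exact fun he => he

end Aux2

theorem hypoUD_bondage' [Fintype V] [DecidableEq V] (G : SimpleGraph V)
    [DecidableRel G.Adj]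
    (h : (∃ D₁ D₂ : Finset V, IsGammaSet G D₁ ∧ IsGammaSet G D₂ ∧ D₁ ≠ D₂) ∧
      ∀ x : V, ∃! D : Finset {u : V // u ≠ x}, IsGammaSet (vdel G x) D) :
    sInf {k | ∃ s : Finset (Sym2 V), ↑s ⊆ G.edgeSet ∧ s.card = k ∧
      domNum G < domNum (G.deleteEdges ↑s)} ≤ G.minDegree + 1 := by
  classical
  obtain ⟨⟨D₁, D₂, hD₁, hD₂, hDne⟩, huniq⟩ := h
  have hV : Nonempty V := by
    by_contra hv
    have hEm : IsEmpty V := not_nonempty_iff.mp hv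
    exact hDne ((Finset.eq_empty_of_isEmpty D₁).trans (Finset.eq_empty_of_isEmpty D₂).symm)
  obtain ⟨x, hx⟩ := G.exists_minimal_degree_vertex
  set s₀ := G.incidenceFinset x with hs₀
  have hs₀sub : ↑s₀ ⊆ G.edgeSet := by
    rw [hs₀, incidenceFinset, Set.coe_toFinset]
    exact G.incidenceSet_subset x
  have hs₀card : s₀.card = G.minDegree := by
    rw [hs₀, card_incidenceFinset_eq_degree, ← hx]
  have hmeminc : ∀ v : V, G.Adj x v → s(x, v) ∈ s₀ := by
    intro v hadj
    rw [hs₀, SimpleGraph.mem_incidenceFinset, SimpleGraph.mk'_mem_incidenceSet_iff]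
    exact ⟨hadj, Or.inl rfl⟩
  have hnotinc : ∀ (a b : {u : V // u ≠ x}), s(↑a, ↑b) ∉ s₀ := by
    intro a b hm
    rw [hs₀, G.mem_incidenceFinset, mk'_mem_incidenceSet_iff] at hm
    rcases hm.2 with hh | hh
    · exact a.2 hh.symm
    · exact b.2 hh.symm
  have key : ∀ s : Finset (Sym2 V), ↑s ⊆ G.edgeSet → s.card ≤ G.minDegree + 1 →
      domNum G < domNum (G.deleteEdges ↑s) →
      sInf {k | ∃ s : Finset (Sym2 V), ↑s ⊆ G.edgeSet ∧ s.card = k ∧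
        domNum G < domNum (G.deleteEdges ↑s)} ≤ G.minDegree + 1 :=
    fun s h1 h2 h3 => le_trans (Nat.sInf_le ⟨s, h1, rfl, h3⟩) h2
  have hiso : ∀ s : Finset (Sym2 V), s₀ ⊆ s → ∀ v, ¬ (G.deleteEdges ↑s).Adj x v := by
    intro s hsub v hadj
    rw [SimpleGraph.deleteEdges_adj] at hadj
    exact hadj.2 (Finset.mem_coe.mpr (hsub (hmeminc v hadj.1)))
  by_cases hcase : domNum G ≤ domNum (vdel G x)
  · -- removing the δ edges at x suffices
    apply key s₀ hs₀sub (by omega)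
    have heq : vdel (G.deleteEdges ↑s₀) x = vdel G x := by
      ext a b
      simp only [vdel, SimpleGraph.comap_adj, SimpleGraph.deleteEdges_adj, Finset.mem_coe]
      exact ⟨fun hh => hh.1, fun hh => ⟨hh, hnotinc a b⟩⟩
    have h1 := isolated_lower (G.deleteEdges ↑s₀) x (hiso s₀ (le_refl _))
    rw [heq] at h1
    omega
  · push_neg at hcase
    have hle3 := domNum_le_vdel G x
    by_cases hE : (vdel G x).edgeSet.Nonempty
    · obtain ⟨eb, heb, hbig⟩ := unique_gamma_edge (vdel G x) hE (huniq x)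
      set e' : Sym2 V := Sym2.map Subtype.val eb with he'
      have he'mem : e' ∈ G.edgeSet := map_edge_mem heb
      set s : Finset (Sym2 V) := insert e' s₀ with hs
      have hsub : ↑s ⊆ G.edgeSet := by
        rw [hs, Finset.coe_insert]
        exact Set.insert_subset he'mem hs₀sub
      have hcard : s.card ≤ G.minDegree + 1 :=
        le_trans (Finset.card_insert_le _ _) (by omega)
      apply key s hsub hcard
      have heq : vdel (G.deleteEdges ↑s) x = (vdel G x).deleteEdges {eb} := by
        ext a b
        simp only [vdel, SimpleGraph.comap_adj, SimpleGraph.deleteEdges_adj, hs,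
          Finset.coe_insert, Set.mem_insert_iff, Finset.mem_coe, Set.mem_singleton_iff]
        constructor
        · rintro ⟨hab, hnm⟩
          refine ⟨hab, fun hm => hnm (Or.inl ?_)⟩
          rw [he', ← hm]
          exact (Sym2.map_pair_eq _ _ _).symm
        · rintro ⟨hab, hnm⟩
          refine ⟨hab, fun hm => ?_⟩
          rcases hm with hm | hm
          · apply hnm
            apply Sym2.map.injective Subtype.val_injective
            rw [Sym2.map_pair_eq, hm, he']
          · exact hnotinc a b hm
      have h1 := isolated_lower (G.deleteEdges ↑s) x
        (hiso s (by rw [hs]; exact Finset.subset_insert _ _))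
      rw [heq] at h1
      omega
    · exfalso
      have hnoadj : ∀ a b : {u : V // u ≠ x}, ¬ (vdel G x).Adj a b := fun a b hab =>
        hE ⟨s(a, b), (vdel G x).mem_edgeSet.mpr hab⟩
      obtain ⟨D, hDdom, hDc⟩ := exists_gammaSet (vdel G x)
      have hDuniv : D = Finset.univ := Finset.eq_univ_iff_forall.mpr (fun a => by
        obtain ⟨u, hu, hor⟩ := hDdom a
        rcases hor with rfl | hadj
        · exact hu
        · exact absurd hadj (hnoadj u a))
      have hγ : domNum (vdel G x) = Fintype.card {u : V // u ≠ x} := by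
        rw [← hDc, hDuniv, Finset.card_univ]
      have hsubc : Fintype.card {u : V // u ≠ x} = Fintype.card V - 1 := by
        have h2 := Fintype.card_subtype_compl (fun u : V => u = x)
        simpa [Fintype.card_subtype_eq] using h2
      have hpos : 0 < Fintype.card V := Fintype.card_pos
      have hγG : domNum G = Fintype.card V := by omega
      have h₁ : D₁ = Finset.univ := (Finset.card_eq_iff_eq_univ _).mp (hD₁.2.trans hγG)
      have h₂ : D₂ = Finset.univ := (Finset.card_eq_iff_eq_univ _).mp (hD₂.2.trans hγG)
      exact hDne (h₁.trans h₂.symm)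

theorem hypoUD_bondage [Fintype V] [DecidableEq V] (G : SimpleGraph V)
    [DecidableRel G.Adj] (h : HypoUD G) :
    bondage G ≤ G.minDegree + 1 :=
  hypoUD_bondage' G h
end

section
/- If G is a hypo-efficient-domination graph, then G is connected. -/
open SimpleGraph

variable {V : Type*}

lemma eds_restrict (G : SimpleGraph V) [DecidableEq V] {x : V}
    {D' : Finset {u : V // u ≠ x}} (hD : IsEDS (vdel G x) D')
    (P : V → Prop) [DecidablePred P]
    (hPadj : ∀ {u v : V}, G.Adj u v → P u → P v) (hPx : ¬ P x) :
    ∃ E : Finset V, (∀ w ∈ E, P w) ∧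
      ∀ v, P v → ∃! u : V, u ∈ E ∧ (u = v ∨ G.Adj u v) := by
  refine ⟨(D'.filter (fun u => P u.val)).image Subtype.val, ?_, ?_⟩
  · intro w hw
    simp only [Finset.mem_image, Finset.mem_filter] at hw
    obtain ⟨u, ⟨-, hu⟩, rfl⟩ := hw
    exact hu
  · intro v hv
    have hvx : v ≠ x := fun e => hPx (e ▸ hv)
    obtain ⟨u, ⟨huD, hud⟩, huniq⟩ := hD ⟨v, hvx⟩
    have hud' : u.val = v ∨ G.Adj u.val v := by
      rcases hud with e | hadj
      · exact Or.inl (congrArg Subtype.val e)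
      · exact Or.inr hadj
    have huP : P u.val := by
      rcases hud' with e | hadj
      · rw [e]; exact hv
      · exact hPadj hadj.symm hv
    refine ⟨u.val, ⟨?_, hud'⟩, ?_⟩
    · simp only [Finset.mem_image, Finset.mem_filter]
      exact ⟨u, ⟨huD, huP⟩, rfl⟩
    · rintro w ⟨hwE, hwd⟩
      simp only [Finset.mem_image, Finset.mem_filter] at hwE
      obtain ⟨u', ⟨hu'D, _⟩, rfl⟩ := hwE
      have he : u' = u := huniq u' ⟨hu'D, by
        rcases hwd with e | hadj
        · exact Or.inl (Subtype.ext e)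
        · exact Or.inr hadj⟩
      exact congrArg Subtype.val he

theorem hypoED_connected [Fintype V] [DecidableEq V] (G : SimpleGraph V)
    (h : HypoED G) : G.Connected := by
  classical
  obtain ⟨hno, hdel⟩ := h
  have hne : Nonempty V := by
    by_contra hne
    exact hno ⟨∅, fun v => ((hne ⟨v⟩)).elim⟩
  rw [connected_iff]
  refine ⟨?_, hne⟩
  by_contra hpc
  simp only [SimpleGraph.Preconnected] at hpc
  push_neg at hpc
  obtain ⟨a, b, hab⟩ := hpc
  set R : V → Prop := fun v => G.Reachable a v with hR
  have hRadj : ∀ {u v : V}, G.Adj u v → R u → R v :=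
    fun hadj hu => hu.trans hadj.reachable
  have hNRadj : ∀ {u v : V}, G.Adj u v → ¬ R u → ¬ R v :=
    fun hadj hu hv => hu (hRadj hadj.symm hv)
  obtain ⟨Da, hDa⟩ := hdel a
  obtain ⟨Db, hDb⟩ := hdel b
  obtain ⟨E₁, hE₁P, hE₁⟩ := eds_restrict G hDb R hRadj hab
  obtain ⟨E₂, hE₂P, hE₂⟩ := eds_restrict G hDa (fun v => ¬ R v) hNRadj
    (not_not.mpr (Reachable.refl a))
  apply hno
  refine ⟨E₁ ∪ E₂, fun v => ?_⟩
  by_cases hv : R v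
  · obtain ⟨u, ⟨huE, hud⟩, huniq⟩ := hE₁ v hv
    refine ⟨u, ⟨Finset.mem_union_left _ huE, hud⟩, ?_⟩
    rintro w ⟨hwD, hwd⟩
    rcases Finset.mem_union.mp hwD with hw | hw
    · exact huniq w ⟨hw, hwd⟩
    · exfalso
      have hnw : ¬ R w := hE₂P w hw
      rcases hwd with e | hadj
      · exact hnw (e ▸ hv)
      · exact hnw (hRadj hadj.symm hv)
  · obtain ⟨u, ⟨huE, hud⟩, huniq⟩ := hE₂ v hv
    refine ⟨u, ⟨Finset.mem_union_right _ huE, hud⟩, ?_⟩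
    rintro w ⟨hwD, hwd⟩
    rcases Finset.mem_union.mp hwD with hw | hw
    · exfalso
      have hnw : R w := hE₁P w hw
      rcases hwd with e | hadj
      · exact hv (e ▸ hnw)
      · exact hv (hRadj hadj hnw)
    · exact huniq w ⟨hw, hwd⟩
end

section
/- Let G be a graph with no efficient dominating set such that |V(G)| = γ(G)(Δ(G)+1) − 1. Then for every minimum dominating set D of G there is exactly one vertex y ∈ V(G)−D such that D is an efficient dominating set of G−y, and this y is adjacent to exactly 2 vertices of D; moreover every vertex of D has degree Δ(G). -/
open SimpleGraph

variable {V : Type*}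

/-- `D` is an efficient dominating set of `G - y` (with `y ∉ D`):
every vertex other than `y` is dominated exactly once by `D`. -/
def IsEDSAvoiding (G : SimpleGraph V) (y : V) (D : Finset V) : Prop :=
  y ∉ D ∧ ∀ v : V, v ≠ y → ∃! u : V, u ∈ D ∧ (u = v ∨ G.Adj u v)

theorem no_EDS_extremal [Fintype V] [DecidableEq V] (G : SimpleGraph V)
    [DecidableRel G.Adj] (hno : ¬ ∃ D : Finset V, IsEDS G D)
    (hcard : Fintype.card V = domNum G * (G.maxDegree + 1) - 1) :
    ∀ D : Finset V, IsGammaSet G D →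
      (∃! y : V, IsEDSAvoiding G y D) ∧
      (∀ y : V, IsEDSAvoiding G y D → (D.filter (fun u => G.Adj y u)).card = 2) ∧
      (∀ x ∈ D, G.degree x = G.maxDegree) := by
  -- V is nonempty, otherwise ∅ is an EDS
  cases isEmpty_or_nonempty V with
  | inl hE => exact absurd ⟨∅, fun v => isEmptyElim v⟩ hno
  | inr hNE =>
  rintro D ⟨hdom, hcardD⟩
  set Δ := G.maxDegree with hΔ
  set d : V → ℕ := fun v => (D.filter (fun u => u = v ∨ G.Adj u v)).card with hd
  -- every vertex is dominated at least once
  have hd1 : ∀ v, 1 ≤ d v := by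
    intro v
    obtain ⟨u, hu, hP⟩ := hdom v
    exact Finset.card_pos.2 ⟨u, Finset.mem_filter.2 ⟨hu, hP⟩⟩
  -- some vertex is dominated at least twice
  have hy0 : ∃ y, 2 ≤ d y := by
    by_contra h
    push_neg at h
    apply hno
    refine ⟨D, fun v => ?_⟩
    obtain ⟨u, hu, hP⟩ := hdom v
    refine ⟨u, ⟨hu, hP⟩, ?_⟩
    intro u' ⟨hu', hP'⟩
    by_contra hne
    have : 2 ≤ d v := by
      apply Finset.one_lt_card.2
      exact ⟨u', Finset.mem_filter.2 ⟨hu', hP'⟩, u, Finset.mem_filter.2 ⟨hu, hP⟩, hne⟩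
    exact absurd (h v) (by omega)
  obtain ⟨y, hy2⟩ := hy0
  -- D is nonempty, so domNum ≥ 1
  have hDne : D.Nonempty := by
    obtain ⟨v⟩ := hNE
    obtain ⟨u, hu, _⟩ := hdom v
    exact ⟨u, hu⟩
  have hγpos : 1 ≤ domNum G := hcardD ▸ Finset.card_pos.2 hDne
  have hVcard : Fintype.card V + 1 = D.card * (Δ + 1) := by
    have h1 : 1 ≤ domNum G * (Δ + 1) := Nat.one_le_iff_ne_zero.2 (by positivity)
    rw [hcardD]
    omega
  -- double counting
  have hdc : ∑ v : V, d v = ∑ u ∈ D, (G.degree u + 1) := by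
    have : ∀ u ∈ D, (Finset.univ.filter (fun v => u = v ∨ G.Adj u v)).card
        = G.degree u + 1 := by
      intro u _
      have : Finset.univ.filter (fun v => u = v ∨ G.Adj u v)
          = insert u (G.neighborFinset u) := by
        ext v
        simp only [Finset.mem_filter, Finset.mem_univ, true_and, Finset.mem_insert,
          mem_neighborFinset]
        constructor
        · rintro (h | h)
          · exact Or.inl h.symm
          · exact Or.inr h
        · rintro (h | h)
          · exact Or.inl h.symm
          · exact Or.inr h
      rw [this, Finset.card_insert_of_notMem (by simp), card_neighborFinset_eq_degree]
    calc ∑ v : V, d v = ∑ v : V, ∑ u ∈ D, if u = v ∨ G.Adj u v then 1 else 0 :=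
          Finset.sum_congr rfl fun v _ => Finset.card_filter _ _
      _ = ∑ u ∈ D, ∑ v : V, if u = v ∨ G.Adj u v then 1 else 0 := Finset.sum_comm
      _ = ∑ u ∈ D, (Finset.univ.filter (fun v => u = v ∨ G.Adj u v)).card :=
          Finset.sum_congr rfl fun u _ => (Finset.card_filter _ _).symm
      _ = ∑ u ∈ D, (G.degree u + 1) := Finset.sum_congr rfl this
  -- upper bound
  have hub : ∑ u ∈ D, (G.degree u + 1) ≤ Fintype.card V + 1 := by
    calc ∑ u ∈ D, (G.degree u + 1) ≤ ∑ u ∈ D, (Δ + 1) :=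
        Finset.sum_le_sum (fun u _ => by
          have := G.degree_le_maxDegree u; omega)
      _ = D.card * (Δ + 1) := by rw [Finset.sum_const, smul_eq_mul]
      _ = Fintype.card V + 1 := hVcard.symm
  -- lower bound
  have hlb : Fintype.card V + 1 ≤ ∑ v : V, d v := by
    have hyu : y ∈ Finset.univ := Finset.mem_univ y
    rw [← Finset.sum_erase_add _ _ hyu]
    have h1 : (Finset.univ.erase y).card ≤ ∑ v ∈ Finset.univ.erase y, d v := by
      calc (Finset.univ.erase y).card = ∑ v ∈ Finset.univ.erase y, 1 := by
            simp
        _ ≤ _ := Finset.sum_le_sum (fun v _ => hd1 v)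
    have hce : (Finset.univ.erase y).card = Fintype.card V - 1 := by
      rw [Finset.card_erase_of_mem hyu, Finset.card_univ]
    have hV1 : 1 ≤ Fintype.card V := Fintype.card_pos
    omega
  have hsum : ∑ v : V, d v = Fintype.card V + 1 := le_antisymm (hdc ▸ hub) hlb
  have hsumD : ∑ u ∈ D, (G.degree u + 1) = Fintype.card V + 1 := hdc ▸ hsum
  -- all degrees in D equal Δ
  have hdeg : ∀ x ∈ D, G.degree x = Δ := by
    intro x hx
    by_contra hne
    have hlt : G.degree x < Δ := lt_of_le_of_ne (G.degree_le_maxDegree x) hne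
    have : ∑ u ∈ D, (G.degree u + 1) < ∑ u ∈ D, (Δ + 1) :=
      Finset.sum_lt_sum (fun u _ => by have := G.degree_le_maxDegree u; omega)
        ⟨x, hx, by omega⟩
    rw [hsumD, Finset.sum_const, smul_eq_mul, ← hVcard] at this
    omega
  -- d v = 1 for v ≠ y
  have hdone : ∀ v, v ≠ y → d v = 1 := by
    intro v hv
    by_contra hne
    have h2 : 2 ≤ d v := by have := hd1 v; omega
    have hyu : y ∈ Finset.univ := Finset.mem_univ y
    have hvu : v ∈ Finset.univ.erase y := Finset.mem_erase.2 ⟨hv, Finset.mem_univ v⟩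
    have hstrict : (Finset.univ.erase y).card < ∑ w ∈ Finset.univ.erase y, d w := by
      calc (Finset.univ.erase y).card = ∑ w ∈ Finset.univ.erase y, 1 := by simp
        _ < _ := Finset.sum_lt_sum (fun w _ => hd1 w) ⟨v, hvu, by omega⟩
    have hsplit : ∑ w ∈ Finset.univ.erase y, d w + d y = ∑ w : V, d w :=
      Finset.sum_erase_add _ _ hyu
    have hce : (Finset.univ.erase y).card = Fintype.card V - 1 := by
      rw [Finset.card_erase_of_mem hyu, Finset.card_univ]
    have hV1 : 1 ≤ Fintype.card V := Fintype.card_pos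
    omega
  -- d y = 2
  have hdy : d y = 2 := by
    by_contra hne
    have h3 : 3 ≤ d y := by omega
    have hyu : y ∈ Finset.univ := Finset.mem_univ y
    have hsplit : ∑ w ∈ Finset.univ.erase y, d w + d y = ∑ w : V, d w :=
      Finset.sum_erase_add _ _ hyu
    have h1 : (Finset.univ.erase y).card ≤ ∑ w ∈ Finset.univ.erase y, d w := by
      calc (Finset.univ.erase y).card = ∑ w ∈ Finset.univ.erase y, 1 := by simp
        _ ≤ _ := Finset.sum_le_sum (fun w _ => hd1 w)
    have hce : (Finset.univ.erase y).card = Fintype.card V - 1 := by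
      rw [Finset.card_erase_of_mem hyu, Finset.card_univ]
    have hV1 : 1 ≤ Fintype.card V := Fintype.card_pos
    omega
  -- translation lemmas
  have hexu : ∀ v, d v = 1 → ∃! u : V, u ∈ D ∧ (u = v ∨ G.Adj u v) := by
    intro v h1
    obtain ⟨a, ha⟩ := Finset.card_eq_one.1 h1
    have haf : a ∈ D.filter (fun u => u = v ∨ G.Adj u v) := ha ▸ Finset.mem_singleton_self a
    rw [Finset.mem_filter] at haf
    refine ⟨a, haf, ?_⟩
    intro u hu
    have : u ∈ D.filter (fun w => w = v ∨ G.Adj w v) := Finset.mem_filter.2 hu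
    rw [ha, Finset.mem_singleton] at this
    exact this
  have hone : ∀ v, (∃! u : V, u ∈ D ∧ (u = v ∨ G.Adj u v)) → d v = 1 := by
    rintro v ⟨a, ha, hau⟩
    apply Finset.card_eq_one.2
    refine ⟨a, ?_⟩
    ext u
    simp only [Finset.mem_filter, Finset.mem_singleton]
    constructor
    · intro hu; exact hau u hu
    · rintro rfl; exact ha
  -- y ∉ D
  have hyD : y ∉ D := by
    intro hyd
    have h2 : 1 < (D.filter (fun u => u = y ∨ G.Adj u y)).card := by
      have : d y = 2 := hdy
      simp only [hd] at this
      omega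
    obtain ⟨u, hu, w, hw, huw⟩ := Finset.one_lt_card.1 h2
    rw [Finset.mem_filter] at hu hw
    -- y itself is in the filter; at least one of u, w differs from y
    have key : ∀ z, z ∈ D → (z = y ∨ G.Adj z y) → z ≠ y → False := by
      intro z hz hP hzy
      have hadj : G.Adj z y := hP.resolve_left hzy
      have h2z : 2 ≤ d z := by
        apply Finset.one_lt_card.2
        refine ⟨z, Finset.mem_filter.2 ⟨hz, Or.inl rfl⟩,
          y, Finset.mem_filter.2 ⟨hyd, Or.inr hadj.symm⟩, hzy⟩
      have := hdone z hzy
      omega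
    by_cases huy : u = y
    · exact key w hw.1 hw.2 (fun h => huw (huy.trans h.symm))
    · exact key u hu.1 hu.2 huy
  -- main EDSAvoiding for y
  have hAvoid : IsEDSAvoiding G y D := ⟨hyD, fun v hv => hexu v (hdone v hv)⟩
  -- uniqueness of y
  have hUniq : ∀ y', IsEDSAvoiding G y' D → y' = y := by
    intro y' ⟨_, hy'⟩
    by_contra hne
    have : d y = 1 := hone y (hy' y (fun h => hne h.symm))
    omega
  refine ⟨⟨y, hAvoid, hUniq⟩, ?_, hdeg⟩
  intro y' hy'
  have hyy : y' = y := hUniq y' hy'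
  subst hyy
  have : D.filter (fun u => G.Adj y' u) = D.filter (fun u => u = y' ∨ G.Adj u y') := by
    apply Finset.filter_congr
    intro u hu
    constructor
    · intro h; exact Or.inr h.symm
    · rintro (rfl | h)
      · exact absurd hu hyD
      · exact h.symm
  rw [this]
  exact hdy
end

section
/- A cycle C_n (n ≥ 3) is a hypo-efficient-domination graph if and only if n is not divisible by 3 and n ≥ 4 (i.e., n ≡ 1 or 2 (mod 3), n ≥ 4). -/
open SimpleGraph

variable {V : Type*}

/-
In an `r`-regular graph the closed neighbourhoods of the vertices of an efficient dominating set
partition the vertex set into blocks of size `r + 1`; for the `2`-regular cycle `C_n` this forces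
`3 ∣ n`, and conversely every third vertex of `C_n` is an EDS when `3 ∣ n`. Deleting any vertex of
`C_n` leaves a path `P_{n-1}` (rotate the deleted vertex to `0`), and every path has an EDS: every
third vertex, starting from a suitable offset.
-/

open Finset

variable {W : Type*}

section EDS

variable {G : SimpleGraph V} {D : Finset V}

theorem IsEDS.map {H : SimpleGraph W} (e : G ≃g H) (hD : IsEDS G D) :
    IsEDS H (D.map e.toEquiv.toEmbedding) := by
  intro w
  obtain ⟨u, ⟨hu, hdom⟩, huniq⟩ := hD (e.symm w)
  refine ⟨e u, ⟨mem_map_of_mem _ hu, ?_⟩, ?_⟩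
  · rcases hdom with rfl | hadj
    · exact Or.inl (e.apply_symm_apply w)
    · exact Or.inr (by simpa using e.map_adj_iff.mpr hadj)
  · rintro _ ⟨hmem, hdom'⟩
    obtain ⟨u', hu', rfl⟩ := mem_map.mp hmem
    refine congrArg e (huniq u' ⟨hu', ?_⟩)
    rcases hdom' with rfl | hadj
    · exact Or.inl (e.symm_apply_apply u').symm
    · exact Or.inr (by simpa using e.symm.map_adj_iff.mpr hadj)

theorem IsEDS.card_eq_mul [Fintype V] [DecidableEq V] [DecidableRel G.Adj] {d : ℕ}
    (hG : G.IsRegularOfDegree d) (hD : IsEDS G D) : Fintype.card V = (d + 1) * D.card := by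
  choose f hf using hD
  have fiber_eq : ∀ u ∈ D, ({v | f v = u} : Finset V) = insert u (G.neighborFinset u) := by
    intro u hu
    ext v
    simp only [mem_filter, mem_univ, true_and, mem_insert, mem_neighborFinset]
    constructor
    · rintro rfl
      exact (hf v).1.2.imp Eq.symm id
    · rintro hdom
      exact ((hf v).2 u ⟨hu, hdom.imp Eq.symm id⟩).symm
  calc Fintype.card V = ∑ u ∈ D, #{v | f v = u} :=
        card_eq_sum_card_fiberwise fun v _ => (hf v).1.1
    _ = ∑ u ∈ D, (d + 1) := sum_congr rfl fun u hu => by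
        rw [fiber_eq u hu, card_insert_of_notMem (by simp), card_neighborFinset_eq_degree,
          hG u]
    _ = (d + 1) * D.card := by rw [sum_const, smul_eq_mul, mul_comm]

end EDS

namespace SimpleGraph

def Iso.vdel {G : SimpleGraph V} {H : SimpleGraph W} (e : G ≃g H) {x : V} {y : W}
    (h : e x = y) : vdel G x ≃g vdel H y where
  toEquiv := e.toEquiv.subtypeEquiv fun _ => by rw [← h]; exact e.injective.ne_iff.symm
  map_rel_iff' := e.map_rel_iff'

theorem cycleGraph_adj_iff_val {n : ℕ} (hn : 2 ≤ n) {u v : Fin n} :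
    (cycleGraph n).Adj u v ↔ u.val + 1 = v.val ∨ v.val + 1 = u.val ∨
      (u.val = 0 ∧ v.val + 1 = n) ∨ (v.val = 0 ∧ u.val + 1 = n) := by
  obtain ⟨m, rfl⟩ : ∃ m, n = m + 2 := ⟨n - 2, by omega⟩
  rw [cycleGraph_adj, sub_eq_iff_eq_add', sub_eq_iff_eq_add', Fin.ext_iff, Fin.ext_iff,
    Fin.val_add_one, Fin.val_add_one]
  have := u.isLt; have := v.isLt
  split_ifs with hu hv hv <;> simp only [Fin.ext_iff, Fin.val_last] at hu hv <;> omega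

theorem cycleGraph_isRegularOfDegree_two {n : ℕ} (hn : 3 ≤ n) :
    (cycleGraph n).IsRegularOfDegree 2 := by
  obtain ⟨m, rfl⟩ : ∃ m, n = m + 3 := ⟨n - 3, by omega⟩
  exact fun _ => cycleGraph_degree_three_le

def cycleGraphRotate {n : ℕ} [NeZero n] (d : Fin n) : cycleGraph n ≃g cycleGraph n where
  toEquiv := Equiv.addRight d
  map_rel_iff' := by
    intro u v
    simp only [Equiv.coe_addRight, cycleGraph_adj', add_sub_add_right_eq_sub]

def pathGraphIsoVdelCycleGraphZero (m : ℕ) : pathGraph m ≃g vdel (cycleGraph (m + 1)) 0 where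
  toEquiv := finSuccAboveEquiv 0
  map_rel_iff' := by
    intro u v
    have := u.isLt
    simp only [vdel, comap_adj, finSuccAboveEquiv_apply, Fin.succAbove_zero, pathGraph_adj,
      cycleGraph_adj_iff_val (show 2 ≤ m + 1 by omega), Fin.val_succ]
    omega

end SimpleGraph

open SimpleGraph

-- The residue is chosen so that both ends `0` and `m - 1` of the path lie within distance one of it.
theorem Nat.exists_near_mod_three {m v : ℕ} (hv : v < m) :
    ∃ k < m, k % 3 = (if m % 3 = 1 then 0 else 1) ∧ (k = v ∨ k = v + 1 ∨ k + 1 = v) := by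
  generalize hr : (if m % 3 = 1 then 0 else 1) = r
  have : m % 3 = 1 ∧ r = 0 ∨ m % 3 ≠ 1 ∧ r = 1 := by split_ifs at hr <;> omega
  by_cases h₀ : v % 3 = r
  · exact ⟨v, hv, h₀, Or.inl rfl⟩
  by_cases h₁ : (v + 1) % 3 = r
  · exact ⟨v + 1, by omega, h₁, Or.inr (Or.inl rfl)⟩
  · exact ⟨v - 1, by omega, by omega, Or.inr (Or.inr (by omega))⟩

theorem pathGraph_exists_isEDS (m : ℕ) : ∃ D, IsEDS (pathGraph m) D := by
  refine ⟨({u | u.val % 3 = if m % 3 = 1 then 0 else 1} : Finset (Fin m)), fun v => ?_⟩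
  obtain ⟨k, hkm, hkr, hkv⟩ := Nat.exists_near_mod_three v.isLt
  refine ⟨⟨k, hkm⟩, ?_, ?_⟩
  · simp only [mem_filter, mem_univ, true_and, Fin.ext_iff, pathGraph_adj]
    omega
  · rintro u ⟨hu, hdom⟩
    simp only [mem_filter, mem_univ, true_and, Fin.ext_iff, pathGraph_adj] at hu hdom ⊢
    split_ifs at hu hkr <;> omega

theorem cycleGraph_exists_isEDS_of_dvd {n : ℕ} (h : 3 ∣ n) : ∃ D, IsEDS (cycleGraph n) D := by
  rcases Nat.eq_zero_or_pos n with rfl | hn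
  · exact ⟨∅, fun v => v.elim0⟩
  refine ⟨({u | u.val % 3 = 1} : Finset (Fin n)), fun v => ?_⟩
  obtain ⟨k, hkm, hkr, hkv⟩ := Nat.exists_near_mod_three v.isLt
  rw [if_neg (by omega)] at hkr
  have hadj := @cycleGraph_adj_iff_val n (by omega)
  refine ⟨⟨k, hkm⟩, ?_, ?_⟩
  · simp only [mem_filter, mem_univ, true_and, Fin.ext_iff, hadj]
    omega
  · rintro u ⟨hu, hdom⟩
    simp only [mem_filter, mem_univ, true_and, Fin.ext_iff, hadj] at hu hdom ⊢
    omega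

theorem three_dvd_of_isEDS_cycleGraph {n : ℕ} (hn : 3 ≤ n) {D : Finset (Fin n)}
    (hD : IsEDS (cycleGraph n) D) : 3 ∣ n := by
  classical
  have := hD.card_eq_mul (cycleGraph_isRegularOfDegree_two hn)
  rw [Fintype.card_fin] at this
  exact ⟨D.card, this⟩

theorem exists_isEDS_vdel_cycleGraph {n : ℕ} [NeZero n] (x : Fin n) :
    ∃ D, IsEDS (vdel (cycleGraph n) x) D := by
  obtain ⟨m, rfl⟩ : ∃ m, n = m + 1 := ⟨n - 1, by have := NeZero.ne n; omega⟩
  have e := (cycleGraphRotate (-x)).vdel (add_neg_cancel x)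
  obtain ⟨D, hD⟩ := pathGraph_exists_isEDS m
  exact ⟨_, (hD.map (pathGraphIsoVdelCycleGraphZero m)).map e.symm⟩

theorem hypoED_cycle (n : ℕ) (hn : 3 ≤ n) :
    HypoED (cycleGraph n) ↔ ¬ (3 ∣ n) ∧ 4 ≤ n := by
  have : NeZero n := ⟨by omega⟩
  constructor
  · rintro ⟨hno, -⟩
    have h3 : ¬ 3 ∣ n := fun h => hno (cycleGraph_exists_isEDS_of_dvd h)
    exact ⟨h3, by omega⟩
  · rintro ⟨h3, -⟩
    exact ⟨fun ⟨_, hD⟩ => h3 (three_dvd_of_isEDS_cycleGraph hn hD), exists_isEDS_vdel_cycleGraph⟩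
end

section
/- Let G be a connected graph on (Δ(G)+1)(γ(G)−1)+1 ≥ 4 vertices. If G is vertex-domination-critical, then for every vertex v, every minimum dominating set of G−v is an efficient dominating set of G−v; in particular G is a hypo-efficient-domination graph. -/
open SimpleGraph

variable {V : Type*}

/-- Every finite graph has a minimum dominating set. -/
lemma exists_gamma_set {W : Type*} [Fintype W] (H : SimpleGraph W) :
    ∃ D : Finset W, IsDomSet H D ∧ D.card = domNum H := by
  have hne : (Finset.univ : Finset W).card ∈
      {n | ∃ D : Finset W, IsDomSet H D ∧ D.card = n} :=
    ⟨Finset.univ, fun v => ⟨v, Finset.mem_univ v, Or.inl rfl⟩, rfl⟩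
  exact Nat.sInf_mem ⟨_, hne⟩

lemma domNum_le_card {W : Type*} (H : SimpleGraph W) (D : Finset W) (h : IsDomSet H D) :
    domNum H ≤ D.card := Nat.sInf_le ⟨D, h, rfl⟩

theorem vc_extremal_hypoED [Fintype V] [DecidableEq V] (G : SimpleGraph V)
    [DecidableRel G.Adj] (hconn : G.Connected)
    (hcard : Fintype.card V = (G.maxDegree + 1) * (domNum G - 1) + 1)
    (h4 : 4 ≤ Fintype.card V)
    (hvc : ∀ v : V, domNum (vdel G v) < domNum G) :
    (∀ x : V, ∀ D : Finset {u : V // u ≠ x},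
      IsGammaSet (vdel G x) D → IsEDS (vdel G x) D) ∧ HypoED G := by
  classical
  have key : ∀ x : V, ∀ D : Finset {u : V // u ≠ x},
      IsGammaSet (vdel G x) D → IsEDS (vdel G x) D := by
    intro x D hDg
    obtain ⟨hdom, hcardD⟩ := hDg
    -- cardinality of the vertex set of `G - x`
    have hcardW : Fintype.card {u : V // u ≠ x} = (G.maxDegree + 1) * (domNum G - 1) := by
      have h1 : Fintype.card {u : V // u ≠ x} = (Finset.univ.filter (· ≠ x)).card :=
        Fintype.card_subtype _
      rw [h1, Finset.filter_ne', Finset.card_erase_of_mem (Finset.mem_univ x),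
        ← Fintype.card, hcard]
      exact Nat.add_sub_cancel _ _
    -- each closed neighborhood in `G - x` has at most `Δ + 1` elements
    have hbound : ∀ u : {u : V // u ≠ x},
        (Finset.univ.filter (fun w => u = w ∨ (vdel G x).Adj u w)).card
          ≤ G.maxDegree + 1 := by
      intro u
      have hsub : ∀ w ∈ Finset.univ.filter (fun w => u = w ∨ (vdel G x).Adj u w),
          (w : V) ∈ insert (u : V) (G.neighborFinset u) := by
        intro w hw
        rcases (Finset.mem_filter.mp hw).2 with h | h
        · exact Finset.mem_insert.mpr (Or.inl (congrArg Subtype.val h.symm))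
        · exact Finset.mem_insert.mpr (Or.inr ((G.mem_neighborFinset _ _).mpr h))
      calc (Finset.univ.filter (fun w => u = w ∨ (vdel G x).Adj u w)).card
          ≤ (insert (u : V) (G.neighborFinset (u : V))).card :=
            Finset.card_le_card_of_injOn Subtype.val hsub
              (fun a _ b _ h => Subtype.ext h)
        _ ≤ (G.neighborFinset (u : V)).card + 1 := Finset.card_insert_le _ _
        _ ≤ G.maxDegree + 1 := Nat.add_le_add_right (G.degree_le_maxDegree _) 1
    -- counting function: number of dominators of each vertex
    set f : {u : V // u ≠ x} → ℕ :=
      fun w => (D.filter (fun u => u = w ∨ (vdel G x).Adj u w)).card with hf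
    have hone : ∀ w, 1 ≤ f w := by
      intro w
      obtain ⟨u, hu, hp⟩ := hdom w
      exact Finset.card_pos.mpr ⟨u, Finset.mem_filter.mpr ⟨hu, hp⟩⟩
    have hDle : D.card ≤ domNum G - 1 := by
      have := hvc x
      omega
    have hsum_le : ∑ w, f w ≤ Fintype.card {u : V // u ≠ x} := by
      have hswap : ∑ w, f w =
          ∑ u ∈ D, (Finset.univ.filter (fun w => u = w ∨ (vdel G x).Adj u w)).card := by
        simp only [hf, Finset.card_filter]
        exact Finset.sum_comm
      calc ∑ w, f w
          = ∑ u ∈ D, (Finset.univ.filter (fun w => u = w ∨ (vdel G x).Adj u w)).card :=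
            hswap
        _ ≤ ∑ _u ∈ D, (G.maxDegree + 1) := Finset.sum_le_sum (fun u _ => hbound u)
        _ = D.card * (G.maxDegree + 1) := by rw [Finset.sum_const, smul_eq_mul]
        _ ≤ (domNum G - 1) * (G.maxDegree + 1) :=
            Nat.mul_le_mul_right _ hDle
        _ = Fintype.card {u : V // u ≠ x} := by rw [hcardW]; ring
    have hsum_ge : Fintype.card {u : V // u ≠ x} ≤ ∑ w, f w := by
      calc Fintype.card {u : V // u ≠ x} = ∑ _w : {u : V // u ≠ x}, 1 := by simp
        _ ≤ ∑ w, f w := Finset.sum_le_sum (fun w _ => hone w)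
    have hsum_eq : ∑ _w : {u : V // u ≠ x}, 1 = ∑ w, f w := by
      have h1 : ∑ _w : {u : V // u ≠ x}, (1 : ℕ) = Fintype.card {u : V // u ≠ x} := by simp
      omega
    have hall : ∀ w, f w = 1 := by
      intro w
      have := (Finset.sum_eq_sum_iff_of_le (fun w _ => hone w)).mp hsum_eq w
        (Finset.mem_univ w)
      omega
    intro w
    obtain ⟨a, ha⟩ := Finset.card_eq_one.mp (hall w)
    have hamem : a ∈ D.filter (fun u => u = w ∨ (vdel G x).Adj u w) := by
      rw [ha]; exact Finset.mem_singleton_self a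
    obtain ⟨haD, hap⟩ := Finset.mem_filter.mp hamem
    refine ⟨a, ⟨haD, hap⟩, ?_⟩
    intro y hy
    have : y ∈ D.filter (fun u => u = w ∨ (vdel G x).Adj u w) :=
      Finset.mem_filter.mpr ⟨hy.1, hy.2⟩
    rw [ha] at this
    exact Finset.mem_singleton.mp this
  refine ⟨key, ?_, ?_⟩
  · -- G has no EDS
    rintro ⟨M, hM⟩
    haveI : Nontrivial V := Fintype.one_lt_card_iff_nontrivial.mp (by omega)
    by_cases hMall : ∀ y : V, y ∈ M
    · -- then G would have no edges, contradicting connectedness on ≥ 4 vertices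
      obtain ⟨a, b, hab⟩ := exists_pair_ne V
      obtain ⟨p⟩ := hconn.preconnected a b
      cases p with
      | nil => exact hab rfl
      | @cons _ c _ h q =>
        obtain ⟨u, _, huniq⟩ := hM c
        have h1 : a = u := huniq a ⟨hMall a, Or.inr h⟩
        have h2 : c = u := huniq c ⟨hMall c, Or.inl rfl⟩
        rw [h1, h2] at h
        exact G.irrefl h
    · push_neg at hMall
      obtain ⟨x, hx⟩ := hMall
      obtain ⟨D, hDdom, hDcard⟩ := exists_gamma_set (vdel G x)
      have hMdom : IsDomSet G M := fun v => by
        obtain ⟨u, hu, _⟩ := hM v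
        exact ⟨u, hu.1, hu.2⟩
      have h1 : domNum G ≤ M.card := domNum_le_card G M hMdom
      obtain ⟨y, hy⟩ := exists_ne x
      set fm : V → {u : V // u ≠ x} := fun m =>
        if h : m = x then ⟨y, hy⟩ else Classical.choose (hDdom ⟨m, h⟩) with hfm
      have hfm_spec : ∀ m ∈ M, fm m ∈ D ∧ ((fm m : V) = m ∨ G.Adj (fm m : V) m) := by
        intro m hm
        have hmx : m ≠ x := fun e => hx (e ▸ hm)
        obtain ⟨h1', h2'⟩ := Classical.choose_spec (hDdom ⟨m, hmx⟩)
        simp only [hfm, dif_neg hmx]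
        refine ⟨h1', ?_⟩
        rcases h2' with h | h
        · exact Or.inl (congrArg Subtype.val h)
        · exact Or.inr h
      have hMD : M.card ≤ D.card := by
        refine Finset.card_le_card_of_injOn fm (fun m hm => (hfm_spec m hm).1) ?_
        intro m1 hm1 m2 hm2 heq
        obtain ⟨_, hp1⟩ := hfm_spec m1 hm1
        obtain ⟨_, hp2⟩ := hfm_spec m2 hm2
        obtain ⟨u, _, huniq⟩ := hM (fm m1 : V)
        have e1 : m1 = u := by
          refine huniq m1 ⟨hm1, ?_⟩
          rcases hp1 with h | h
          · exact Or.inl h.symm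
          · exact Or.inr h.symm
        have e2 : m2 = u := by
          refine huniq m2 ⟨hm2, ?_⟩
          rw [heq]
          rcases hp2 with h | h
          · exact Or.inl h.symm
          · exact Or.inr h.symm
        rw [e1, e2]
      have h2 : domNum (vdel G x) < domNum G := hvc x
      omega
  · -- G - x has an EDS for every x
    intro x
    obtain ⟨D, h1, h2⟩ := exists_gamma_set (vdel G x)
    exact ⟨D, key x D ⟨h1, h2⟩⟩
end
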